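/- Fix W₀ ∈ V_s and W ∈ V_s with d_q(W, W₀) = j. The number of t-dimensional subspaces U of W with ℓ_q(U, W₀) = k equals [s−j choose t−k]_q · [j choose k]_q · q^{((s−j)−(t−k))·k}. -/

import Mathlib

/-!
Double counting. Call `(a, b)` adapted to `X ≤ V` if `a` is a linearly independent `m`-tuple
in `X` and `b` a `k`-tuple linearly independent modulo `X`. Its span `U` has `dim U = m + k` and
`U ⊓ X = span a`, and the adapted pairs spanning a given such `U` are exactly the pairs adapted to
`U ⊓ X` inside `U`. With `l = dim X` and `s = dim V` there are
`∏ i < m, (q^l - q^i) · q^(l k) · ∏ i < k, (q^(s-l) - q^i)` adapted pairs in `V` and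
`∏ i < m, (q^m - q^i) · q^(m k) · ∏ i < k, (q^k - q^i)` in each `U`, the factor `q^(dim · k)`
counting the lifts of `b` from the quotient. Finally
`∏ i < b, (q^a - q^i) = [a choose b]_q · ∏ i < b, (q^b - q^i)`.
-/

open Module

/-- The `q`-factorial `a!_q = ∏_{k=1}^a (q^k - 1)/(q - 1)`. -/
noncomputable def qFact (q : ℚ) (a : ℕ) : ℚ := ∏ k ∈ Finset.range a, (q ^ (k + 1) - 1) / (q - 1)

/-- The Gaussian binomial coefficient `[a choose b]_q = a!_q / (b!_q (a-b)!_q)`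
(and `0` when `b > a`). -/
noncomputable def qChoose (q : ℚ) (a b : ℕ) : ℚ :=
  if b ≤ a then qFact q a / (qFact q b * qFact q (a - b)) else 0

open Finset

lemma qFact_ne_zero {q : ℚ} (hq : 1 < q) (a : ℕ) : qFact q a ≠ 0 :=
  prod_ne_zero_iff.2 fun i _ ↦
    div_ne_zero (sub_ne_zero.2 (one_lt_pow₀ hq i.succ_ne_zero).ne') (sub_ne_zero.2 hq.ne')

lemma prod_pow_sub_pow_mul_qFact {q : ℚ} (hq : q ≠ 1) (c b : ℕ) :
    (∏ i ∈ range b, (q ^ (c + b) - q ^ i)) * qFact q c =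
      qFact q (c + b) * ((q - 1) ^ b * ∏ i ∈ range b, q ^ i) := by
  induction b with
  | zero => simp
  | succ b ih =>
    have hshift : ∏ i ∈ range (b + 1), (q ^ (c + (b + 1)) - q ^ i) =
        (∏ i ∈ range b, (q ^ (c + b) - q ^ i)) * q ^ b * (q ^ (c + b + 1) - 1) := by
      have hterm (i : ℕ) : q ^ (c + (b + 1)) - q ^ (i + 1) = q * (q ^ (c + b) - q ^ i) := by ring
      simp_rw [prod_range_succ' _ b, hterm, prod_mul_distrib, prod_const, card_range]
      ring
    have hq' : q - 1 ≠ 0 := sub_ne_zero.2 hq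
    rw [hshift, mul_right_comm, mul_right_comm _ (q ^ b), ih, qFact, qFact, ← add_assoc,
      prod_range_succ, prod_range_succ]
    field_simp
    ring

lemma qChoose_mul_prod_pow_sub_pow {q : ℚ} (hq : 1 < q) (a b : ℕ) :
    qChoose q a b * ∏ i ∈ range b, (q ^ b - q ^ i) = ∏ i ∈ range b, (q ^ a - q ^ i) := by
  rcases le_or_gt b a with hba | hab
  · obtain ⟨c, rfl⟩ := Nat.exists_eq_add_of_le' hba
    have hb := prod_pow_sub_pow_mul_qFact hq.ne' 0 b
    have hcb := prod_pow_sub_pow_mul_qFact hq.ne' c b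
    have hb0 := qFact_ne_zero hq b
    have hc0 := qFact_ne_zero hq c
    rw [zero_add, qFact, prod_range_zero, mul_one] at hb
    rw [qChoose, if_pos hba, Nat.add_sub_cancel, hb, eq_div_of_mul_eq hc0 hcb]
    field_simp
  · rw [qChoose, if_neg hab.not_ge, zero_mul, eq_comm]
    exact prod_eq_zero (mem_range.2 hab) (sub_self _)

theorem Nat.cast_prod_pow_sub_pow {R : Type*} [CommRing R] {q : ℕ} (hq : 1 ≤ q) (a b : ℕ) :
    ((∏ i ∈ range b, (q ^ a - q ^ i) : ℕ) : R) = ∏ i ∈ range b, ((q : R) ^ a - (q : R) ^ i) := by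
  rcases le_or_gt b a with hba | hab
  · push_cast
    refine prod_congr rfl fun i hi ↦ ?_
    rw [Nat.cast_sub (Nat.pow_le_pow_right hq (by simp at hi; omega)), Nat.cast_pow, Nat.cast_pow]
  · rw [prod_eq_zero (f := fun i ↦ q ^ a - q ^ i) (mem_range.2 hab) (Nat.sub_self _),
      prod_eq_zero (mem_range.2 hab) (sub_self _), Nat.cast_zero]

theorem prod_pow_sub_pow_self_pos {q : ℚ} (hq : 1 < q) (b : ℕ) :
    0 < ∏ i ∈ range b, (q ^ b - q ^ i) :=
  prod_pos fun _ hi ↦ sub_pos.2 (pow_lt_pow_right₀ hq (mem_range.1 hi))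

section Modules

variable {R M N : Type*} [Ring R] [AddCommGroup M] [AddCommGroup N] [Module R M] [Module R N]

theorem LinearMap.card_subtype_comp_of_surjective {f : M →ₗ[R] N} (hf : Function.Surjective f)
    (ι : Type*) [Finite ι] (P : (ι → N) → Prop) :
    Nat.card {b : ι → M // P (f ∘ b)} = Nat.card (ker f) ^ Nat.card ι * Nat.card {c // P c} := by
  let σ := Function.surjInv hf
  have hσ : ∀ y, f (σ y) = y := Function.surjInv_eq hf
  have hker : ∀ x, x - σ (f x) ∈ ker f := fun x ↦ by simp [hσ]
  let e : {b : ι → M // P (f ∘ b)} ≃ (ι → ker f) × {c // P c} :=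
    { toFun := fun b ↦ (fun i ↦ ⟨b.1 i - σ (f (b.1 i)), hker _⟩, ⟨f ∘ b.1, b.2⟩)
      invFun := fun p ↦ ⟨fun i ↦ p.1 i + σ (p.2.1 i), by
        convert p.2.2 using 2; ext i; simp [hσ]⟩
      left_inv := fun b ↦ by ext; simp
      right_inv := fun p ↦ by ext <;> simp [hσ] }
  rw [Nat.card_congr e, Nat.card_prod, Nat.card_fun]

theorem Submodule.card_subtype_forall_mem_and {ι : Type*} (P : Submodule R M)
    (Q : (ι → M) → Prop) :
    Nat.card {b : ι → M // (∀ i, b i ∈ P) ∧ Q b} = Nat.card {b : ι → P // Q (P.subtype ∘ b)} :=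
  Nat.card_congr
    { toFun := fun b ↦ ⟨fun i ↦ ⟨b.1 i, b.2.1 i⟩, b.2.2⟩
      invFun := fun b ↦ ⟨P.subtype ∘ b.1, fun i ↦ (b.1 i).2, b.2⟩
      left_inv := fun _ ↦ rfl
      right_inv := fun _ ↦ rfl }

theorem Submodule.card_subtype_le_and (W : Submodule R M) (P : Submodule R M → Prop) :
    Nat.card {U // U ≤ W ∧ P U} = Nat.card {U : Submodule R W // P (U.map W.subtype)} :=
  Nat.card_congr ((Equiv.subtypeSubtypeEquivSubtypeInter (· ≤ W) P).symm.trans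
    (Equiv.subtypeEquiv (Submodule.MapSubtype.orderIso W).toEquiv fun _ ↦ Iff.rfl).symm)

theorem Submodule.finrank_comap_subtype (U X : Submodule R M) :
    finrank R (X.comap U.subtype) = finrank R ↥(U ⊓ X) := by
  rw [← Submodule.map_comap_subtype, Submodule.finrank_map_subtype_eq]

end Modules

section AdaptedFrames

variable {F V : Type*} [Field F] [AddCommGroup V] [Module F V]

def adaptedFrames (X U : Submodule F V) (m k : ℕ) : Set ((Fin m → V) × (Fin k → V)) :=
  {a | (∀ i, a i ∈ U ⊓ X) ∧ LinearIndependent F a} ×ˢ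
    {b | (∀ i, b i ∈ U) ∧ LinearIndependent F (X.mkQ ∘ b)}

variable (F) in
def frameSpan {m k : ℕ} (p : (Fin m → V) × (Fin k → V)) : Submodule F V :=
  Submodule.span F (Set.range p.1) ⊔ Submodule.span F (Set.range p.2)

variable [FiniteDimensional F V]

theorem finrank_frameSpan {X U : Submodule F V} {m k : ℕ} {p : (Fin m → V) × (Fin k → V)}
    (hp : p ∈ adaptedFrames X U m k) :
    finrank F (frameSpan F p) = m + k ∧ finrank F ↥(frameSpan F p ⊓ X) = m := by
  obtain ⟨⟨haUX, ha⟩, -, hb⟩ := hp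
  set A := Submodule.span F (Set.range p.1)
  set B := Submodule.span F (Set.range p.2)
  have hAX : A ≤ X := Submodule.span_le.2 (Set.range_subset_iff.2 fun i ↦ (haUX i).2)
  have hBX : Disjoint B X := by simpa using Submodule.range_ker_disjoint hb
  have hA : finrank F A = m := by rw [finrank_span_eq_card ha, Fintype.card_fin]
  have hB : finrank F B = k := by rw [finrank_span_eq_card hb.of_comp, Fintype.card_fin]
  have hsup := Submodule.finrank_sup_add_finrank_inf_eq A B
  rw [(hBX.mono_right hAX).symm.eq_bot, finrank_bot] at hsup
  refine ⟨show finrank F ↥(A ⊔ B) = m + k by omega, ?_⟩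
  rw [frameSpan, sup_inf_assoc_of_le _ hAX, hBX.eq_bot, sup_bot_eq, hA]

theorem mem_adaptedFrames_top_and_frameSpan_eq_iff {X U : Submodule F V} {m k : ℕ}
    (hU : finrank F U = m + k) (p : (Fin m → V) × (Fin k → V)) :
    p ∈ adaptedFrames X ⊤ m k ∧ frameSpan F p = U ↔ p ∈ adaptedFrames X U m k := by
  constructor
  · rintro ⟨⟨⟨haX, ha⟩, -, hb⟩, rfl⟩
    refine ⟨⟨fun i ↦ ⟨?_, (haX i).2⟩, ha⟩, fun i ↦ ?_, hb⟩
    · exact Submodule.mem_sup_left (Submodule.subset_span ⟨i, rfl⟩)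
    · exact Submodule.mem_sup_right (Submodule.subset_span ⟨i, rfl⟩)
  · intro hp
    obtain ⟨⟨haUX, ha⟩, hbU, hb⟩ := id hp
    refine ⟨⟨⟨fun i ↦ ⟨trivial, (haUX i).2⟩, ha⟩, fun _ ↦ trivial, hb⟩, ?_⟩
    refine Submodule.eq_of_le_of_finrank_eq (sup_le ?_ ?_) ?_
    · exact Submodule.span_le.2 (Set.range_subset_iff.2 fun i ↦ (haUX i).1)
    · exact Submodule.span_le.2 (Set.range_subset_iff.2 hbU)
    · rw [(finrank_frameSpan hp).1, hU]

end AdaptedFrames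

section FiniteField

variable {F : Type*} [Field F] [Fintype F]

theorem card_linearIndependent_eq_prod_range {V : Type*} [AddCommGroup V] [Module F V] [Finite V]
    (k : ℕ) : Nat.card {s : Fin k → V // LinearIndependent F s} =
      ∏ i ∈ range k, (Fintype.card F ^ finrank F V - Fintype.card F ^ i) := by
  rcases le_or_gt k (finrank F V) with hk | hk
  · rw [card_linearIndependent hk, Fin.prod_univ_eq_prod_range (fun i ↦ _ ^ _ - _ ^ i)]
  · rw [prod_eq_zero (f := fun i ↦ Fintype.card F ^ finrank F V - Fintype.card F ^ i)
      (mem_range.2 hk) (Nat.sub_self _), Nat.card_eq_zero]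
    have : Module.Finite F V := Module.Finite.of_finite
    exact .inl ⟨fun ⟨s, hs⟩ ↦ by simpa using hs.fintype_card_le_finrank.trans_lt hk⟩

theorem card_linearIndependent_comp {M N : Type*} [AddCommGroup M] [Module F M] [Finite M]
    [AddCommGroup N] [Module F N] (f : M →ₗ[F] N) (k : ℕ) :
    Nat.card {b : Fin k → M // LinearIndependent F (f ∘ b)} =
      Fintype.card F ^ (finrank F (LinearMap.ker f) * k) *
        ∏ i ∈ range k, (Fintype.card F ^ (finrank F M - finrank F (LinearMap.ker f)) -
          Fintype.card F ^ i) := by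
  have : Module.Finite F M := Module.Finite.of_finite
  have hrank : finrank F (LinearMap.range f) = finrank F M - finrank F (LinearMap.ker f) := by
    have := f.finrank_range_add_finrank_ker
    omega
  have hli (b : Fin k → M) : LinearIndependent F (f ∘ b) ↔
      LinearIndependent F (f.rangeRestrict ∘ b) :=
    (LinearMap.range f).subtype.linearIndependent_iff_of_injOn (v := f.rangeRestrict ∘ b)
      Subtype.val_injective.injOn
  have : Finite (LinearMap.range f) := Finite.of_surjective _ f.surjective_rangeRestrict
  rw [Nat.card_congr (Equiv.subtypeEquivRight hli),
    LinearMap.card_subtype_comp_of_surjective f.surjective_rangeRestrict (Fin k)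
      (fun c ↦ LinearIndependent F c), LinearMap.ker_rangeRestrict,
    card_linearIndependent_eq_prod_range, hrank, Module.natCard_eq_pow_finrank (K := F),
    Nat.card_eq_fintype_card (α := F), Nat.card_fin, pow_mul]

variable {V : Type*} [AddCommGroup V] [Module F V] [Finite V]

theorem card_adaptedFrames (X U : Submodule F V) (m k : ℕ) :
    Nat.card (adaptedFrames X U m k) =
      (∏ i ∈ range m, (Fintype.card F ^ finrank F ↥(U ⊓ X) - Fintype.card F ^ i)) *
        (Fintype.card F ^ (finrank F ↥(U ⊓ X) * k) *
          ∏ i ∈ range k, (Fintype.card F ^ (finrank F U - finrank F ↥(U ⊓ X)) -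
            Fintype.card F ^ i)) := by
  rw [adaptedFrames, Nat.card_congr (Equiv.Set.prod _ _), Nat.card_prod]
  have ha := ((U ⊓ X).card_subtype_forall_mem_and (LinearIndependent F ·)).trans
    (card_linearIndependent_comp (U ⊓ X).subtype m)
  have hb := (U.card_subtype_forall_mem_and
    (fun b : Fin k → V ↦ LinearIndependent F (X.mkQ ∘ b))).trans
      (card_linearIndependent_comp (X.mkQ ∘ₗ U.subtype) k)
  rw [Submodule.ker_subtype, finrank_bot, zero_mul, pow_zero, one_mul, Nat.sub_zero] at ha
  rw [LinearMap.ker_comp, Submodule.ker_mkQ, Submodule.finrank_comap_subtype] at hb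
  exact congrArg₂ (· * ·) ha hb

theorem card_submodule_finrank_inf_mul (X : Submodule F V) (m k : ℕ) :
    Nat.card {U : Submodule F V // finrank F U = m + k ∧ finrank F ↥(U ⊓ X) = m} *
      ((∏ i ∈ range m, (Fintype.card F ^ m - Fintype.card F ^ i)) *
        (Fintype.card F ^ (m * k) * ∏ i ∈ range k, (Fintype.card F ^ k - Fintype.card F ^ i))) =
    (∏ i ∈ range m, (Fintype.card F ^ finrank F X - Fintype.card F ^ i)) *
      (Fintype.card F ^ (finrank F X * k) *
        ∏ i ∈ range k, (Fintype.card F ^ (finrank F V - finrank F X) - Fintype.card F ^ i)) := by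
  have : Module.Finite F V := Module.Finite.of_finite
  let S := {U : Submodule F V // finrank F U = m + k ∧ finrank F ↥(U ⊓ X) = m}
  have : Finite (Submodule F V) := Finite.of_injective _ SetLike.coe_injective
  have : Fintype S := Fintype.ofFinite S
  let Φ : adaptedFrames X ⊤ m k → S := fun p ↦ ⟨frameSpan F p.1, finrank_frameSpan p.2⟩
  have hfiber (U : S) : Nat.card {p // Φ p = U} = Nat.card (adaptedFrames X U m k) :=
    Nat.card_congr <| (Equiv.subtypeEquivRight fun _ ↦ Subtype.ext_iff).trans <|
      (Equiv.subtypeSubtypeEquivSubtypeInter _ (frameSpan F · = U.1)).trans <|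
        Equiv.subtypeEquivRight (mem_adaptedFrames_top_and_frameSpan_eq_iff U.2.1)
  calc Nat.card S * _ = ∑ U : S, Nat.card {p // Φ p = U} := by
        rw [Fintype.sum_congr _ _ fun U ↦ by rw [hfiber, card_adaptedFrames, U.2.2, U.2.1,
          Nat.add_sub_cancel_left], sum_const, card_univ, Nat.card_eq_fintype_card, smul_eq_mul]
    _ = Nat.card (adaptedFrames X ⊤ m k) := by
      rw [← Nat.card_sigma, Nat.card_congr (Equiv.sigmaFiberEquiv Φ)]
    _ = _ := by rw [card_adaptedFrames, top_inf_eq, finrank_top]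

theorem card_submodule_finrank_eq_add_finrank_inf_eq (X : Submodule F V) (m k : ℕ) :
    (Nat.card {U : Submodule F V // finrank F U = m + k ∧ finrank F ↥(U ⊓ X) = m} : ℚ) =
      qChoose (Fintype.card F) (finrank F X) m *
        qChoose (Fintype.card F) (finrank F V - finrank F X) k *
          (Fintype.card F : ℚ) ^ ((finrank F X - m) * k) := by
  have hq : 1 < Fintype.card F := Fintype.one_lt_card
  have hq' : (1 : ℚ) < Fintype.card F := by exact_mod_cast hq
  have hcount := congrArg (Nat.cast : ℕ → ℚ) (card_submodule_finrank_inf_mul X m k)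
  simp only [Nat.cast_mul, Nat.cast_pow, Nat.cast_prod_pow_sub_pow hq.le] at hcount
  set q := Fintype.card F
  set l := finrank F X
  rw [← qChoose_mul_prod_pow_sub_pow hq' l m,
    ← qChoose_mul_prod_pow_sub_pow hq' (finrank F V - l) k] at hcount
  have hpow : qChoose q l m * (q : ℚ) ^ (l * k) =
      qChoose q l m * ((q : ℚ) ^ ((l - m) * k) * (q : ℚ) ^ (m * k)) := by
    rcases le_or_gt m l with hml | hlm
    · rw [← pow_add, ← add_mul, Nat.sub_add_cancel hml]
    · simp [qChoose, hlm.not_ge]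
  have hm := prod_pow_sub_pow_self_pos hq' m
  have hk := prod_pow_sub_pow_self_pos hq' k
  refine mul_right_cancel₀ (by positivity : (∏ i ∈ range m, ((q : ℚ) ^ m - (q : ℚ) ^ i)) *
    ((q : ℚ) ^ (m * k) * ∏ i ∈ range k, ((q : ℚ) ^ k - (q : ℚ) ^ i)) ≠ 0) ?_
  rw [hcount]
  linear_combination (∏ i ∈ range m, ((q : ℚ) ^ m - (q : ℚ) ^ i)) *
    (∏ i ∈ range k, ((q : ℚ) ^ k - (q : ℚ) ^ i)) * qChoose q (finrank F V - l) k * hpow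

end FiniteField

theorem stmt15_general (q n s t j k : ℕ) (F : Type) [Field F] [Fintype F] (hF : Fintype.card F = q)
    (hkt : k ≤ t)
    (W₀ W : Submodule F (Fin n → F)) (hW : finrank F W = s)
    (hd : finrank F W - finrank F ↥(W ⊓ W₀) = j) :
    (Nat.card {U : Submodule F (Fin n → F) //
        U ≤ W ∧ finrank F U = t ∧ finrank F U - finrank F ↥(U ⊓ W₀) = k} : ℚ) =
      qChoose q (s - j) (t - k) * qChoose q j k * (q : ℚ) ^ (((s - j) - (t - k)) * k) := by
  subst hF
  have hX : finrank F (W₀.comap W.subtype) = s - j := by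
    have := Submodule.finrank_mono (inf_le_left : W ⊓ W₀ ≤ W)
    rw [Submodule.finrank_comap_subtype]
    omega
  have hcard : Nat.card {U : Submodule F (Fin n → F) //
      U ≤ W ∧ finrank F U = t ∧ finrank F U - finrank F ↥(U ⊓ W₀) = k} =
      Nat.card {U : Submodule F W //
        finrank F U = t - k + k ∧ finrank F ↥(U ⊓ W₀.comap W.subtype) = t - k} := by
    rw [W.card_subtype_le_and]
    refine Nat.card_congr (Equiv.subtypeEquivRight fun U ↦ ?_)
    rw [Submodule.finrank_map_subtype_eq, Submodule.map_inf_eq_map_inf_comap,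
      Submodule.finrank_map_subtype_eq]
    have := Submodule.finrank_mono (inf_le_left : U ⊓ W₀.comap W.subtype ≤ U)
    omega
  rw [hcard, card_submodule_finrank_eq_add_finrank_inf_eq, hX, hW,
    show s - (s - j) = j by omega]

/-- Fix `W₀ ∈ V_s` and `W ∈ V_s` with `d_q(W,W₀) = j`.  The number of
`t`-dimensional subspaces `U ≤ W` with `ℓ_q(U,W₀) = dim U - dim(U ∩ W₀) = k` equals
`[s-j choose t-k]_q · [j choose k]_q · q^(((s-j)-(t-k))·k)`. -/
theorem stmt15 (q n s t j k : ℕ) (F : Type) [Field F] [Fintype F] (hF : Fintype.card F = q)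
    (hs : s ≤ n) (hts : t ≤ s) (hkt : k ≤ t) (hj : j ≤ s)
    (W₀ W : Submodule F (Fin n → F)) (hW₀ : finrank F W₀ = s) (hW : finrank F W = s)
    (hd : finrank F W - finrank F ↥(W ⊓ W₀) = j) :
    (Nat.card {U : Submodule F (Fin n → F) //
        U ≤ W ∧ finrank F U = t ∧ finrank F U - finrank F ↥(U ⊓ W₀) = k} : ℚ) =
      qChoose q (s - j) (t - k) * qChoose q j k * (q : ℚ) ^ (((s - j) - (t - k)) * k) :=
  stmt15_general q n s t j k F hF hkt W₀ W hW hd
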